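/- arXiv:2202.13762 — 2 statements merged into one kernel-verified Lean document; each statement's English description precedes it below -/
import Mathlib

section
/- For every n ≥ 1 and −1 ≤ α, q ≤ 1, the type-B symmetrization operator on K_n = H^{⊗2n} factorizes as P_{α,q}^{(n)} = (I ⊗ P_{α,q}^{(n−1)} ⊗ I) R_{α,q}^{(n)}, where R_{α,q}^{(1)} = I + α π_0 and, for n ≥ 2, R_{α,q}^{(n)} = I + Σ_{k=1}^{n−1} q^k π_{n−1}⋯π_{n−k} + α q^{n−1} π_{n−1}π_{n−2}⋯π_1 π_0 (I + Σ_{k=1}^{n−1} q^k π_1⋯π_k), all operators acting on K_n via the B(n)-action. -/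
open scoped TensorProduct ComplexConjugate InnerProductSpace
open PiTensorProduct

noncomputable section

abbrev SIdx (n : ℕ) := Fin n × Bool
def negIdx {n : ℕ} (p : SIdx n) : SIdx n := (p.1, !p.2)
def sval {n : ℕ} (p : SIdx n) : ℤ := if p.2 then (p.1 : ℤ) + 1 else -((p.1 : ℤ) + 1)

def hyperoctahedral (n : ℕ) : Subgroup (Equiv.Perm (SIdx n)) where
  carrier := {σ | ∀ p, σ (negIdx p) = negIdx (σ p)}
  one_mem' := fun _ => rfl
  mul_mem' := by
    intro σ τ hσ hτ p
    simp only [Equiv.Perm.mul_apply, hτ p, hσ (τ p)]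
  inv_mem' := by
    intro σ hσ p
    have := hσ (σ⁻¹ p)
    simp only [← Equiv.Perm.mul_apply, mul_inv_cancel, Equiv.Perm.one_apply] at this
    have h2 : σ⁻¹ (σ (negIdx (σ⁻¹ p))) = σ⁻¹ (negIdx p) := by rw [this]
    simpa using h2.symm

instance (n : ℕ) : DecidablePred (· ∈ hyperoctahedral n) := fun σ =>
  decidable_of_iff (∀ p, σ (negIdx p) = negIdx (σ p)) Iff.rfl

def ninv {n : ℕ} (σ : Equiv.Perm (SIdx n)) : ℕ :=
  (Finset.univ.filter fun i : Fin n => sval (σ (i, true)) < 0).card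

def pinv {n : ℕ} (σ : Equiv.Perm (SIdx n)) : ℕ :=
  (Finset.univ.filter fun ij : Fin n × Fin n =>
      ij.1 < ij.2 ∧ sval (σ (ij.2, true)) < sval (σ (ij.1, true))).card +
  (Finset.univ.filter fun ij : Fin n × Fin n =>
      ij.1 < ij.2 ∧ sval (σ (ij.1, true)) < sval (σ (ij.2, false))).card

variable (H : Type*) [NormedAddCommGroup H] [InnerProductSpace ℂ H]

abbrev KSp (n : ℕ) : Type _ := ⨂[ℂ] (_ : SIdx n), H

def permB {n : ℕ} (σ : Equiv.Perm (SIdx n)) : KSp H n ≃ₗ[ℂ] KSp H n :=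
  PiTensorProduct.reindex ℂ (fun _ : SIdx n => H) σ

def symB (n : ℕ) (α q : ℝ) : Module.End ℂ (KSp H n) :=
  ∑ σ : hyperoctahedral n,
    (((α : ℂ) ^ ninv (σ : Equiv.Perm (SIdx n))) * ((q : ℂ) ^ pinv (σ : Equiv.Perm (SIdx n)))) •
      (permB H (σ : Equiv.Perm (SIdx n))).toLinearMap

open Fin.NatCast in
def tauGen (n : ℕ) [NeZero n] (i : ℕ) : Equiv.Perm (SIdx n) :=
  if i = 0 then Equiv.swap ((0 : Fin n), false) ((0 : Fin n), true)
  else Equiv.swap (((i - 1 : ℕ) : Fin n), true) ((i : Fin n), true) *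
       Equiv.swap (((i - 1 : ℕ) : Fin n), false) ((i : Fin n), false)

/-- The operator of the generator `π_i` on `K_n`. -/
def tauEnd (n : ℕ) [NeZero n] (i : ℕ) : Module.End ℂ (KSp H n) :=
  (permB H (tauGen n i)).toLinearMap

/-- `R_{α,q}^{(n)}` for `n = m+1`:
`R = I + ∑_{k=1}^{n-1} q^k π_{n-1}⋯π_{n-k}
   + α q^{n-1} π_{n-1}⋯π_1 π_0 (I + ∑_{k=1}^{n-1} q^k π_1⋯π_k)`. -/
def Rop (m : ℕ) (α q : ℝ) : Module.End ℂ (KSp H (m + 1)) :=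
  1 + (∑ k ∈ Finset.Icc 1 m,
        (q : ℂ) ^ k • ((List.range k).map fun j => tauEnd H (m + 1) (m - j)).prod)
    + ((α : ℂ) * (q : ℂ) ^ m) •
        (((List.range m).map fun j => tauEnd H (m + 1) (m - j)).prod * tauEnd H (m + 1) 0 *
          (1 + ∑ k ∈ Finset.Icc 1 m,
            (q : ℂ) ^ k • ((List.range k).map fun j => tauEnd H (m + 1) (1 + j)).prod))

def midEquiv (m : ℕ) : SIdx m ≃ {p : SIdx (m + 1) // (p.1 : ℕ) < m} where
  toFun a := ⟨(a.1.castSucc, a.2), by simp⟩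
  invFun b := (⟨(b.1.1 : ℕ), b.2⟩, b.1.2)
  left_inv := by intro a; ext <;> simp
  right_inv := by intro b; ext <;> simp

def extendMid (m : ℕ) (σ : Equiv.Perm (SIdx m)) : Equiv.Perm (SIdx (m + 1)) :=
  σ.extendDomain (midEquiv m)

/-- `I ⊗ P_{α,q}^{(n-1)} ⊗ I` acting on `K_n` for `n = m+1`: the type-B symmetrization of the
middle `2m` factors, identity on the outermost factors `±(m+1)`. -/
def midSym (m : ℕ) (α q : ℝ) : Module.End ℂ (KSp H (m + 1)) :=
  ∑ σ : hyperoctahedral m,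
    (((α : ℂ) ^ ninv (σ : Equiv.Perm (SIdx m))) * ((q : ℂ) ^ pinv (σ : Equiv.Perm (SIdx m)))) •
      (permB H (extendMid m (σ : Equiv.Perm (SIdx m)))).toLinearMap

/-! Every `π ∈ B(m+1)` factors uniquely as `π = σ̃ · r_p`, where `p = π⁻¹(+(m+1))`, `r_p` moves
the column of `p` to the last column (so that `r_p p = +(m+1)`) keeping the order of the other
columns, and `σ̃` is the image of some `σ ∈ B(m)` acting on the middle factors. In the window of
`π` the letter `±(m+1)` is larger in absolute value than all others, so it changes the statistics
by fixed amounts: no negative letter and `m - j` inversions if `p = +(j+1)`, one negative letter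
and `m + j` inversions if `p = -(j+1)`. Hence `P^{(m+1)} = (I ⊗ P^{(m)} ⊗ I) · ∑_p c_p r_p`, and
expanding `R^{(m+1)}` shows that the products `π_m ⋯ π_{j+1}` and `π_m ⋯ π_1 π_0 π_1 ⋯ π_j` in it
are exactly the representatives `r_{+(j+1)}` and `r_{-(j+1)}`, with the same coefficients. -/

theorem Equiv.Perm.exists_extendDomain_eq {α β : Type*} {p : β → Prop} [DecidablePred p]
    (f : α ≃ Subtype p) {ρ : Equiv.Perm β} (hρ : ∀ b, ¬ p b → ρ b = b) :
    ∃ σ : Equiv.Perm α, σ.extendDomain f = ρ := by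
  have hp : ∀ b, p (ρ b) ↔ p b := fun b => by
    by_cases hb : p b
    · exact iff_of_true
        (Classical.byContradiction fun h => h ((ρ.injective (hρ _ h)).symm ▸ hb)) hb
    · rw [hρ b hb]
  refine ⟨f.permCongr.symm (ρ.subtypePerm hp), Equiv.ext fun b => ?_⟩
  by_cases hb : p b
  · simp [Equiv.Perm.extendDomain_apply_subtype _ _ hb, Equiv.permCongr_apply]
  · rw [Equiv.Perm.extendDomain_apply_not_subtype _ _ hb, hρ b hb]

theorem Fin.sum_ite_val_lt {M : Type*} [AddCommMonoid M] {m t : ℕ} (ht : t ≤ m) (x y : M) :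
    ∑ a : Fin m, (if (a : ℕ) < t then x else y) = t • x + (m - t) • y := by
  have hsplit := Finset.card_filter_add_card_filter_not (s := Finset.univ)
    (fun a : Fin m => (a : ℕ) < t)
  rw [Finset.card_univ, Fintype.card_fin, Fin.card_filter_val_lt, min_eq_right ht] at hsplit
  rw [Finset.sum_ite, Finset.sum_const, Finset.sum_const, Fin.card_filter_val_lt, min_eq_right ht]
  congr 2
  omega

theorem Fin.sum_univ_eq_add_sum_Icc_one {M : Type*} [AddCommMonoid M] (f : ℕ → M) (n : ℕ) :
    ∑ k : Fin (n + 1), f k = f 0 + ∑ k ∈ Finset.Icc 1 n, f k := by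
  rw [Fin.sum_univ_eq_sum_range, ← Finset.sum_insert (f := f) (by simp), ← zero_add 1,
    Finset.insert_Icc_add_one_left_eq_Icc (Nat.zero_le n), Finset.range_eq_Ico]
  rfl

section

open Equiv

variable {m : ℕ}

def permBHom (n : ℕ) : Perm (SIdx n) →* Module.End ℂ (KSp H n) where
  toFun σ := (permB H σ).toLinearMap
  map_one' := by
    rw [permB, Perm.one_def, PiTensorProduct.reindex_refl]
    rfl
  map_mul' σ τ := by
    rw [permB, Perm.mul_def, ← PiTensorProduct.reindex_trans]
    rfl

theorem permBHom_apply {n : ℕ} (σ : Perm (SIdx n)) :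
    permBHom H n σ = (permB H σ).toLinearMap := rfl

def cosetRepFun (p x : SIdx (m + 1)) : SIdx (m + 1) :=
  if x.1 < p.1 then x
  else if x.1 = p.1 then (Fin.last m, xor x.2 !p.2)
  else (⟨x.1 - 1, by omega⟩, x.2)

theorem cosetRepFun_injective (p : SIdx (m + 1)) : Function.Injective (cosetRepFun p) := by
  rintro ⟨⟨i, hi⟩, c⟩ ⟨⟨i', hi'⟩, c'⟩ h
  rcases p with ⟨⟨j, hj⟩, b⟩
  simp only [cosetRepFun, Fin.lt_def, Fin.ext_iff] at h
  split_ifs at h <;> simp_all [Prod.ext_iff, Fin.ext_iff] <;> omega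

def cosetRep (p : SIdx (m + 1)) : Perm (SIdx (m + 1)) :=
  Equiv.ofBijective _ (cosetRepFun_injective p).bijective_of_finite

theorem cosetRep_apply (p x : SIdx (m + 1)) : cosetRep p x = cosetRepFun p x := rfl

theorem cosetRep_mem (p : SIdx (m + 1)) : cosetRep p ∈ hyperoctahedral (m + 1) := by
  intro x
  simp only [cosetRep_apply, cosetRepFun, negIdx]
  split_ifs <;> simp

theorem cosetRep_apply_self (p : SIdx (m + 1)) : cosetRep p p = (Fin.last m, true) := by
  simp [cosetRep_apply, cosetRepFun]

theorem cosetRep_apply_fst_self (p : SIdx (m + 1)) (c : Bool) :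
    cosetRep p (p.1, c) = (Fin.last m, xor c !p.2) := by
  simp [cosetRep_apply, cosetRepFun]

theorem cosetRep_apply_succAbove (p : SIdx (m + 1)) (a : Fin m) (c : Bool) :
    cosetRep p (p.1.succAbove a, c) = (a.castSucc, c) := by
  rcases p with ⟨⟨j, hj⟩, b⟩
  rcases a with ⟨i, hi⟩
  simp only [cosetRep_apply, cosetRepFun, Fin.succAbove, Fin.lt_def]
  split_ifs <;> simp_all [Fin.ext_iff] <;> omega

theorem extendMid_apply_castSucc (σ : Perm (SIdx m)) (i : Fin m) (c : Bool) :
    extendMid m σ (i.castSucc, c) = ((σ (i, c)).1.castSucc, (σ (i, c)).2) :=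
  Perm.extendDomain_apply_image σ (midEquiv m) (i, c)

theorem extendMid_apply_last (σ : Perm (SIdx m)) (c : Bool) :
    extendMid m σ (Fin.last m, c) = (Fin.last m, c) :=
  Perm.extendDomain_apply_not_subtype _ _ (by simp)

theorem extendMid_injective : Function.Injective (extendMid m) :=
  Perm.extendDomainHom_injective (midEquiv m)

theorem extendMid_mem_iff {σ : Perm (SIdx m)} :
    extendMid m σ ∈ hyperoctahedral (m + 1) ↔ σ ∈ hyperoctahedral m := by
  constructor
  · rintro h ⟨i, c⟩
    simpa [negIdx, extendMid_apply_castSucc, Prod.ext_iff] using h (i.castSucc, c)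
  · rintro h ⟨i, c⟩
    induction i using Fin.lastCases with
    | last => simp [negIdx, extendMid_apply_last]
    | cast i =>
      have hi := h (i, c)
      simp only [negIdx] at hi
      simp [negIdx, extendMid_apply_castSucc, hi]

theorem exists_extendMid_eq {ρ : Perm (SIdx (m + 1))} (hρ : ρ ∈ hyperoctahedral (m + 1))
    (hfix : ρ (Fin.last m, true) = (Fin.last m, true)) :
    ∃ σ ∈ hyperoctahedral m, extendMid m σ = ρ := by
  obtain ⟨σ, hσ⟩ := Perm.exists_extendDomain_eq (midEquiv m) (ρ := ρ) fun ⟨i, c⟩ hi => by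
    obtain rfl : i = Fin.last m := Fin.eq_last_of_not_lt hi
    cases c
    · simpa [negIdx, hfix] using hρ (Fin.last m, true)
    · exact hfix
  refine ⟨σ, extendMid_mem_iff.mp ?_, hσ⟩
  rwa [extendMid, hσ]

def cosetMul (x : hyperoctahedral m × SIdx (m + 1)) : hyperoctahedral (m + 1) :=
  ⟨extendMid m x.1 * cosetRep x.2,
    Subgroup.mul_mem _ (extendMid_mem_iff.mpr x.1.2) (cosetRep_mem x.2)⟩

theorem extendMid_mul_cosetRep_inv_apply_last (σ : Perm (SIdx m)) (p : SIdx (m + 1)) :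
    (extendMid m σ * cosetRep p)⁻¹ (Fin.last m, true) = p := by
  rw [Perm.inv_eq_iff_eq, Perm.mul_apply, cosetRep_apply_self, extendMid_apply_last]

theorem cosetMul_bijective : Function.Bijective (cosetMul (m := m)) := by
  constructor
  · rintro ⟨σ, p⟩ ⟨σ', p'⟩ h
    have h' : extendMid m σ * cosetRep p = extendMid m σ' * cosetRep p' :=
      congrArg Subtype.val h
    obtain rfl : p = p' := by
      rw [← extendMid_mul_cosetRep_inv_apply_last σ p, h', extendMid_mul_cosetRep_inv_apply_last]
    exact Prod.ext (Subtype.ext (extendMid_injective (mul_right_cancel h'))) rfl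
  · rintro ⟨π, hπ⟩
    set p := π⁻¹ (Fin.last m, true)
    have hfix : (π * (cosetRep p)⁻¹) (Fin.last m, true) = (Fin.last m, true) := by
      rw [Perm.mul_apply, Perm.inv_eq_iff_eq.mpr (cosetRep_apply_self p).symm]
      exact π.apply_symm_apply _
    obtain ⟨σ, hσ, hσπ⟩ := exists_extendMid_eq
      (Subgroup.mul_mem _ hπ (Subgroup.inv_mem _ (cosetRep_mem p))) hfix
    exact ⟨(⟨σ, hσ⟩, p), Subtype.ext (by simp [cosetMul, hσπ])⟩

open Fin.NatCast in
theorem tauGen_succ_apply {j : ℕ} (hj : j < m) (i : Fin (m + 1)) (c : Bool) :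
    tauGen (m + 1) (j + 1) (i, c) = (swap ⟨j, by omega⟩ ⟨j + 1, by omega⟩ i, c) := by
  have hcast : ∀ t (ht : t < m + 1), ((t : ℕ) : Fin (m + 1)) = ⟨t, ht⟩ :=
    fun t ht => Fin.ext (Fin.val_cast_of_lt ht)
  simp only [tauGen, Nat.add_sub_cancel, hcast j (by omega), hcast (j + 1) (by omega),
    Nat.succ_ne_zero, if_false, Perm.mul_apply]
  cases c <;> simp [swap_apply_def, Prod.ext_iff] <;> split_ifs <;> simp_all

theorem tauGen_zero_apply (i : Fin (m + 1)) (c : Bool) :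
    tauGen (m + 1) 0 (i, c) = if i = 0 then (i, !c) else (i, c) := by
  simp only [tauGen, if_true, swap_apply_def]
  cases c <;> split_ifs <;> simp_all

theorem cosetRep_last_true : cosetRep (Fin.last m, true) = 1 := by
  refine Equiv.ext fun ⟨⟨i, hi⟩, c⟩ => ?_
  simp only [Perm.one_apply, cosetRep_apply, cosetRepFun, Fin.ext_iff, Fin.lt_def]
  split_ifs <;> simp_all [Prod.ext_iff, Fin.ext_iff]; omega

theorem cosetRep_succ_true_mul_tauGen {j : ℕ} (hj : j < m) :
    cosetRep (⟨j + 1, by omega⟩, true) * tauGen (m + 1) (j + 1) =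
      cosetRep (⟨j, by omega⟩, true) := by
  refine Equiv.ext fun ⟨⟨i, hi⟩, c⟩ => ?_
  simp only [Perm.mul_apply, tauGen_succ_apply hj, cosetRep_apply, cosetRepFun, swap_apply_def,
    Fin.ext_iff, Fin.lt_def]
  split_ifs <;> simp_all [Prod.ext_iff, Fin.ext_iff] <;> omega

theorem cosetRep_zero_true_mul_tauGen_zero :
    cosetRep ((0 : Fin (m + 1)), true) * tauGen (m + 1) 0 = cosetRep (0, false) := by
  refine Equiv.ext fun ⟨⟨i, hi⟩, c⟩ => ?_
  simp only [Perm.mul_apply, tauGen_zero_apply, cosetRep_apply, cosetRepFun,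
    Fin.ext_iff, Fin.lt_def]
  split_ifs <;> simp_all

theorem cosetRep_false_mul_tauGen {j : ℕ} (hj : j < m) :
    cosetRep (⟨j, by omega⟩, false) * tauGen (m + 1) (j + 1) =
      cosetRep (⟨j + 1, by omega⟩, false) := by
  refine Equiv.ext fun ⟨⟨i, hi⟩, c⟩ => ?_
  simp only [Perm.mul_apply, tauGen_succ_apply hj, cosetRep_apply, cosetRepFun, swap_apply_def,
    Fin.ext_iff, Fin.lt_def]
  split_ifs <;> simp_all [Prod.ext_iff, Fin.ext_iff] <;> omega

theorem list_prod_tauGen_desc {k : ℕ} (hk : k ≤ m) :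
    ((List.range k).map fun j => tauGen (m + 1) (m - j)).prod =
      cosetRep (⟨m - k, by omega⟩, true) := by
  induction k with
  | zero => exact cosetRep_last_true.symm
  | succ k ih =>
    rw [List.range_succ, List.map_append, List.prod_append, ih (by omega), List.map_singleton,
      List.prod_singleton]
    have step := cosetRep_succ_true_mul_tauGen (m := m) (j := m - (k + 1)) (by omega)
    simp only [show m - (k + 1) + 1 = m - k by omega] at step
    exact step

theorem cosetRep_zero_mul_list_prod_tauGen_asc {k : ℕ} (hk : k ≤ m) :
    cosetRep ((0 : Fin (m + 1)), true) * tauGen (m + 1) 0 *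
        ((List.range k).map fun j => tauGen (m + 1) (1 + j)).prod =
      cosetRep (⟨k, by omega⟩, false) := by
  induction k with
  | zero => simpa using cosetRep_zero_true_mul_tauGen_zero
  | succ k ih =>
    rw [List.range_succ, List.map_append, List.prod_append, ← mul_assoc, ih (by omega),
      List.map_singleton, List.prod_singleton, add_comm 1 k]
    exact cosetRep_false_mul_tauGen (by omega)

theorem list_prod_tauEnd (f : ℕ → ℕ) (k : ℕ) :
    ((List.range k).map fun j => tauEnd H (m + 1) (f j)).prod =
      permBHom H (m + 1) ((List.range k).map fun j => tauGen (m + 1) (f j)).prod := by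
  rw [map_list_prod, List.map_map]
  rfl

def cosetCoeff (m : ℕ) (α q : ℝ) (p : SIdx (m + 1)) : ℂ :=
  if p.2 then (q : ℂ) ^ (m - p.1 : ℕ) else (α : ℂ) * (q : ℂ) ^ (m + p.1 : ℕ)

theorem one_add_sum_tauEnd_desc_eq_sum_cosetRep (q : ℝ) :
    1 + ∑ k ∈ Finset.Icc 1 m,
        (q : ℂ) ^ k • ((List.range k).map fun j => tauEnd H (m + 1) (m - j)).prod =
      ∑ j : Fin (m + 1), (q : ℂ) ^ (m - j : ℕ) • permBHom H (m + 1) (cosetRep (j, true)) := by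
  have h0 : (1 : Module.End ℂ (KSp H (m + 1))) =
      (q : ℂ) ^ 0 • ((List.range 0).map fun j => tauEnd H (m + 1) (m - j)).prod := by simp
  rw [h0, ← Fin.sum_univ_eq_add_sum_Icc_one (fun k => (q : ℂ) ^ k •
    ((List.range k).map fun j => tauEnd H (m + 1) (m - j)).prod)]
  refine Fintype.sum_equiv Fin.revPerm _ _ fun k => ?_
  rw [list_prod_tauEnd, list_prod_tauGen_desc (Fin.is_le k)]
  have hrev : Fin.revPerm k = ⟨m - k, by omega⟩ := Fin.ext (by simp [Fin.val_rev])
  rw [hrev, Nat.sub_sub_self (Fin.is_le k)]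

theorem tauEnd_desc_mul_tauEnd_zero_mul_eq_sum_cosetRep (q : ℝ) :
    ((List.range m).map fun j => tauEnd H (m + 1) (m - j)).prod * tauEnd H (m + 1) 0 *
        (1 + ∑ k ∈ Finset.Icc 1 m,
          (q : ℂ) ^ k • ((List.range k).map fun j => tauEnd H (m + 1) (1 + j)).prod) =
      ∑ j : Fin (m + 1), (q : ℂ) ^ (j : ℕ) • permBHom H (m + 1) (cosetRep (j, false)) := by
  have h0 : (1 : Module.End ℂ (KSp H (m + 1))) =
      (q : ℂ) ^ 0 • ((List.range 0).map fun j => tauEnd H (m + 1) (1 + j)).prod := by simp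
  have hdesc : ((List.range m).map fun j => tauGen (m + 1) (m - j)).prod =
      cosetRep (0, true) := by
    rw [list_prod_tauGen_desc le_rfl]
    simp
  rw [h0, ← Fin.sum_univ_eq_add_sum_Icc_one (fun k => (q : ℂ) ^ k •
    ((List.range k).map fun j => tauEnd H (m + 1) (1 + j)).prod), Finset.mul_sum]
  refine Finset.sum_congr rfl fun k _ => ?_
  rw [mul_smul_comm, list_prod_tauEnd, list_prod_tauEnd, tauEnd, ← permBHom_apply, ← map_mul,
    ← map_mul, hdesc, cosetRep_zero_mul_list_prod_tauGen_asc (Fin.is_le k)]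

theorem Rop_eq_sum_cosetRep (α q : ℝ) :
    Rop H m α q = ∑ p, cosetCoeff m α q p • permBHom H (m + 1) (cosetRep p) := by
  rw [Rop, one_add_sum_tauEnd_desc_eq_sum_cosetRep,
    tauEnd_desc_mul_tauEnd_zero_mul_eq_sum_cosetRep, Finset.smul_sum, ← Finset.sum_add_distrib,
    Fintype.sum_prod_type]
  refine Finset.sum_congr rfl fun j _ => ?_
  simp [cosetCoeff, smul_smul, mul_assoc, ← pow_add, add_comm]

def signedInv {n : ℕ} (w : Fin n → ℤ) : ℕ :=
  ∑ i, ∑ i', ((if i < i' ∧ w i' < w i then 1 else 0) + (if i < i' ∧ w i < -w i' then 1 else 0))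

theorem signedInv_eq_add_of_succAbove (w : Fin (m + 1) → ℤ) (j : Fin (m + 1))
    (hbound : ∀ a, |w (j.succAbove a)| ≤ m) (hj : w j = m + 1 ∨ w j = -(m + 1)) :
    signedInv w = signedInv (w ∘ j.succAbove) + if 0 < w j then m - j else m + j := by
  -- `|w j|` exceeds every other `|w|`, so a pair through `j` is an inversion by position alone
  have hcross : ∀ a : Fin m,
      ((if j < j.succAbove a ∧ w (j.succAbove a) < w j then 1 else 0) +
        (if j < j.succAbove a ∧ w j < -w (j.succAbove a) then 1 else 0)) +
      ((if j.succAbove a < j ∧ w j < w (j.succAbove a) then 1 else 0) +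
        (if j.succAbove a < j ∧ w (j.succAbove a) < -w j then 1 else 0)) =
      if (a : ℕ) < j then (if 0 < w j then 0 else 2) else 1 := fun a => by
    simp only [Fin.lt_succAbove_iff_le_castSucc, Fin.succAbove_lt_iff_castSucc_lt]
    simp only [Fin.le_def, Fin.lt_def, Fin.val_castSucc]
    have := abs_le.mp (hbound a)
    split_ifs <;> omega
  have hsplit : ∀ f : Fin (m + 1) → Fin (m + 1) → ℕ, ∑ i, ∑ i', f i i' =
      f j j + ∑ a, (f j (j.succAbove a) + f (j.succAbove a) j) +
        ∑ a, ∑ a', f (j.succAbove a) (j.succAbove a') := fun f => by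
    simp only [Fin.sum_univ_succAbove _ j, Finset.sum_add_distrib]
    ring
  simp only [signedInv, hsplit, lt_irrefl, false_and, if_false, hcross,
    Fin.succAbove_lt_succAbove_iff, Function.comp_apply]
  rw [Fin.sum_ite_val_lt (Fin.is_le j)]
  have := Fin.is_le j
  split_ifs <;> simp only [smul_eq_mul] <;> omega

def window {n : ℕ} (π : Perm (SIdx n)) (i : Fin n) : ℤ := sval (π (i, true))

theorem abs_sval_le {n : ℕ} (x : SIdx n) : |sval x| ≤ n := by
  rcases x with ⟨i, c⟩
  have := i.isLt
  cases c <;> simp [sval, abs_le] <;> omega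

theorem sval_castSucc (i : Fin m) (c : Bool) :
    sval ((i.castSucc, c) : SIdx (m + 1)) = sval (i, c) := by
  cases c <;> simp [sval]

theorem ninv_eq_sum_window {n : ℕ} (π : Perm (SIdx n)) :
    ninv π = ∑ i, if window π i < 0 then 1 else 0 := by
  rw [ninv, Finset.card_filter]
  rfl

theorem pinv_eq_signedInv_window {n : ℕ} {π : Perm (SIdx n)} (hπ : π ∈ hyperoctahedral n) :
    pinv π = signedInv (window π) := by
  have hneg : ∀ i, sval (π (i, false)) = -window π i := fun i => by
    rw [window, show ((i, false) : SIdx n) = negIdx (i, true) from rfl, hπ]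
    rcases π (i, true) with ⟨k, _ | _⟩ <;> simp [sval, negIdx]
  simp only [pinv, signedInv, Finset.card_filter, ← Finset.sum_add_distrib, hneg]
  rw [← Fintype.sum_prod_type']
  rfl

theorem window_extendMid_mul_cosetRep_succAbove (σ : Perm (SIdx m)) (p : SIdx (m + 1))
    (a : Fin m) : window (extendMid m σ * cosetRep p) (p.1.succAbove a) = window σ a := by
  rw [window, Perm.mul_apply, cosetRep_apply_succAbove, extendMid_apply_castSucc, sval_castSucc]
  rfl

theorem window_extendMid_mul_cosetRep_self (σ : Perm (SIdx m)) (p : SIdx (m + 1)) :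
    window (extendMid m σ * cosetRep p) p.1 = if p.2 then (m : ℤ) + 1 else -((m : ℤ) + 1) := by
  rw [window, Perm.mul_apply, cosetRep_apply_fst_self, extendMid_apply_last]
  cases p.2 <;> simp [sval]

theorem ninv_extendMid_mul_cosetRep (σ : Perm (SIdx m)) (p : SIdx (m + 1)) :
    ninv (extendMid m σ * cosetRep p) = ninv σ + if p.2 then 0 else 1 := by
  rw [ninv_eq_sum_window, ninv_eq_sum_window, Fin.sum_univ_succAbove _ p.1,
    window_extendMid_mul_cosetRep_self]
  simp only [window_extendMid_mul_cosetRep_succAbove]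
  have : (0 : ℤ) ≤ m := m.cast_nonneg
  cases p.2 <;> simp only [if_true, Bool.false_eq_true, if_false] <;> split_ifs <;> omega

theorem pinv_extendMid_mul_cosetRep {σ : Perm (SIdx m)} (hσ : σ ∈ hyperoctahedral m)
    (p : SIdx (m + 1)) :
    pinv (extendMid m σ * cosetRep p) = pinv σ + if p.2 then m - p.1 else m + p.1 := by
  have hmem := Subgroup.mul_mem _ (extendMid_mem_iff.mpr hσ) (cosetRep_mem p)
  have hcomp : window (extendMid m σ * cosetRep p) ∘ p.1.succAbove = window σ :=
    funext (window_extendMid_mul_cosetRep_succAbove σ p)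
  rw [pinv_eq_signedInv_window hmem, pinv_eq_signedInv_window hσ,
    signedInv_eq_add_of_succAbove _ p.1, hcomp, window_extendMid_mul_cosetRep_self]
  · cases p.2 <;> simp only [if_true, Bool.false_eq_true, if_false] <;> split_ifs <;> omega
  · intro a
    rw [window_extendMid_mul_cosetRep_succAbove]
    exact abs_sval_le _
  · rw [window_extendMid_mul_cosetRep_self]
    cases p.2 <;> simp

theorem weight_extendMid_mul_cosetRep (α q : ℝ) {σ : Perm (SIdx m)}
    (hσ : σ ∈ hyperoctahedral m) (p : SIdx (m + 1)) :
    (α : ℂ) ^ ninv (extendMid m σ * cosetRep p) * (q : ℂ) ^ pinv (extendMid m σ * cosetRep p) =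
      (α : ℂ) ^ ninv σ * (q : ℂ) ^ pinv σ * cosetCoeff m α q p := by
  rw [ninv_extendMid_mul_cosetRep, pinv_extendMid_mul_cosetRep hσ, cosetCoeff]
  cases p.2 <;> simp [pow_add] <;> ring

end

theorem symB_factorization (m : ℕ) (α q : ℝ) :
    symB H (m + 1) α q = midSym H m α q * Rop H m α q := by
  rw [symB, ← cosetMul_bijective.sum_comp, Fintype.sum_prod_type, midSym, Rop_eq_sum_cosetRep,
    Finset.sum_mul_sum]
  refine Finset.sum_congr rfl fun σ _ => Finset.sum_congr rfl fun p _ => ?_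
  rw [smul_mul_smul_comm, ← weight_extendMid_mul_cosetRep α q σ.2 p,
    ← permBHom_apply H (extendMid m σ), ← map_mul]
  rfl
end
end

section
/- For every n ≥ 0, the number of non-crossing pair partitions of type B on [±2n] equals the central binomial coefficient: #NC^B_2(2n) = C(2n, n). -/
open scoped TensorProduct ComplexConjugate InnerProductSpace DirectSum
open PiTensorProduct

noncomputable section

variable (H : Type*) [NormedAddCommGroup H] [InnerProductSpace ℂ H]

/-- A real structure (conjugation) on `H`: `H` is the complexification of the
real Hilbert space `H_ℝ` of its fixed points. -/
structure RealStructure where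
  J : H →ₗ⋆[ℂ] H
  invol : ∀ v, J (J v) = v
  inner_map : ∀ u v, ⟪J u, J v⟫_ℂ = ⟪v, u⟫_ℂ

/-- The set `P^B_{1,2}(N)` of type-B set partitions of `[±N]` into singletons and pairs,
encoded as involutions `m` of `[±N]`: the 2-element orbits `{p, m p}` are the pair blocks and
the fixed points are the singletons.  The conditions say that `m` is an involution, that the
partition is invariant under reflection (`π̄ = π`), and that no pair block equals its own
reflection (`V ≠ V̄`). -/
def PB12 (N : ℕ) : Finset (SIdx N → SIdx N) :=
  Finset.univ.filter fun m =>
    (∀ p, m (m p) = p) ∧ (∀ p, m (negIdx p) = negIdx (m p)) ∧ (∀ p, m p ≠ negIdx p)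

/-- The set `P^B_2(N)` of type-B pair partitions of `[±N]` (no singleton blocks). -/
def PB2 (N : ℕ) : Finset (SIdx N → SIdx N) := (PB12 N).filter fun m => ∀ p, m p ≠ p

/-- `b` is the canonical representative of a B-pair `((-b,-a),(a,b))` of `m` (with
`-b < b`, `|a| < |b|`): `b` is the element of largest absolute value of the two blocks which
is positive, and `a = m b`. -/
def isRep {N : ℕ} (m : SIdx N → SIdx N) (b : SIdx N) : Prop :=
  0 < sval b ∧ |sval (m b)| < sval b

instance {N : ℕ} (m : SIdx N → SIdx N) (b : SIdx N) : Decidable (isRep m b) :=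
  decidable_of_iff (0 < sval b ∧ |sval (m b)| < sval b) Iff.rfl

/-- `Nb(π)`: the number of negative B-pairs `((-b,-a),(a,b))` of `π` (those with `a·b < 0`). -/
def NbB {N : ℕ} (m : SIdx N → SIdx N) : ℕ :=
  (Finset.univ.filter fun b : SIdx N => isRep m b ∧ sval (m b) < 0).card

/-- `Cr(π)`: the number of crossings of B-pairs: the number of (ordered) pairs of B-pairs
`((V̄,V),(W̄,W))` with `V` crossing `W`, plus the number of (mirror-classes of) pairs of
B-pairs with `V̄` crossing `W` (pairs `(i,j)`, `(k,l)` cross when `i<k<j<l`). -/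
def CrB {N : ℕ} (m : SIdx N → SIdx N) : ℕ :=
  (Finset.univ.filter fun bc : SIdx N × SIdx N =>
      isRep m bc.1 ∧ isRep m bc.2 ∧
      sval (m bc.1) < sval (m bc.2) ∧ sval (m bc.2) < sval bc.1 ∧ sval bc.1 < sval bc.2).card +
  (Finset.univ.filter fun bc : SIdx N × SIdx N =>
      isRep m bc.1 ∧ isRep m bc.2 ∧ sval bc.1 < sval bc.2 ∧
      -sval bc.1 < sval (m bc.2) ∧ sval (m bc.2) < -sval (m bc.1) ∧
      -sval (m bc.1) < sval bc.2).card

/-- `Cs(π)`: the number of pairs (B-singleton `((-v),(v))`, covering B-pair `(W̄,W)`) such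
that `W` covers `(v)`, plus the number of those such that `W` covers `(-v)`. -/
def CsB {N : ℕ} (m : SIdx N → SIdx N) : ℕ :=
  (Finset.univ.filter fun sc : SIdx N × SIdx N =>
      (m sc.1 = sc.1 ∧ 0 < sval sc.1) ∧ isRep m sc.2 ∧
      sval (m sc.2) < sval sc.1 ∧ sval sc.1 < sval sc.2).card +
  (Finset.univ.filter fun sc : SIdx N × SIdx N =>
      (m sc.1 = sc.1 ∧ 0 < sval sc.1) ∧ isRep m sc.2 ∧
      sval (m sc.2) < -sval sc.1 ∧ -sval sc.1 < sval sc.2).card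

/-- The set of outerPart B-pairs of `π` (represented by their canonical representatives):
B-pairs not covered by another B-pair. -/
def OutB {N : ℕ} (m : SIdx N → SIdx N) : Finset (SIdx N) :=
  Finset.univ.filter fun b : SIdx N => isRep m b ∧
    ∀ c : SIdx N, isRep m c → ¬(sval (m c) < sval (m b) ∧ sval b < sval c)

/-- `NC^B_2(N)`: non-crossing type-B pair partitions of `[±N]` (`Cr(π) = 0`). -/
def NCB (N : ℕ) : Finset (SIdx N → SIdx N) := (PB2 N).filter fun m => CrB m = 0

/-!
Restricting a type-B pair partition of `[±N]` to the positive points and forgetting signs gives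
a perfect matching of `{1, …, N}`, each pair coloured by whether its B-pair `((-b,-a),(a,b))` is
negative (`a < 0`); by the reflection symmetry this loses nothing. Under this correspondence
`Cr(π) = 0` says exactly that the matching is non-crossing and that no coloured pair lies inside
another pair. Removing the pair of the smallest point leaves an uncoloured non-crossing matching
inside it and a coloured one to its right. So if `a N` and `b N` count the uncoloured and the
coloured matchings, `a (m + 2) = ∑ a i * a (m - i)` and `b (m + 2) = 2 ∑ a i * b (m - i)`.
Odd sizes contribute nothing, hence `a (2k) = catalan k`, and `b (2n) = centralBinom n` because
`(n + 1) * catalan n = centralBinom n` turns `centralBinom (n + 1) = (n + 2) * catalan (n + 1)`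
into `2 ∑ catalan i * centralBinom (n - i)`.
-/

namespace NCPairing

/-- `(f, e)` encodes a non-crossing perfect matching of `{0, …, N-1}`: `f` is its
fixed-point-free involution, extended by the identity from `N` on, and `e` colours its pairs.
Only outer pairs may be coloured, and none unless `colored`. -/
structure IsNCPairing (colored : Bool) (N : ℕ) (f : ℕ → ℕ) (e : ℕ → Bool) : Prop where
  involutive : Function.Involutive f
  ne_self : ∀ i < N, f i ≠ i
  eq_self : ∀ i, N ≤ i → f i = i
  color_apply : ∀ i, e (f i) = e i
  color_eq_false : ∀ i, N ≤ i → e i = false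
  uncolored : colored = false → ∀ i, e i = false
  not_cross : ∀ j l, ¬(f j < f l ∧ f l < j ∧ j < l)
  colored_outer : ∀ j l, e j = true → ¬(f l < f j ∧ f j < j ∧ j < l)

def pairings (colored : Bool) (N : ℕ) : Set ((ℕ → ℕ) × (ℕ → Bool)) :=
  {p | IsNCPairing colored N p.1 p.2}

theorem mem_pairings {c : Bool} {N : ℕ} {p : (ℕ → ℕ) × (ℕ → Bool)} :
    p ∈ pairings c N ↔ IsNCPairing c N p.1 p.2 := Iff.rfl

namespace IsNCPairing

variable {c : Bool} {N : ℕ} {f : ℕ → ℕ} {e : ℕ → Bool}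

theorem apply_lt (h : IsNCPairing c N f e) {i : ℕ} (hi : i < N) : f i < N := by
  by_contra hge
  have hfi := h.involutive i
  rw [h.eq_self (f i) (not_lt.mp hge)] at hfi
  exact h.ne_self i hi hfi

theorem apply_le_apply_zero (h : IsNCPairing c N f e) (hN : 0 < N) {x : ℕ} (hx : x ≤ f 0) :
    f x ≤ f 0 := by
  have h0 := h.ne_self 0 hN
  have hf0 := h.involutive 0
  have hfx := h.involutive x
  have := h.not_cross (f 0) (f x)
  rcases Nat.eq_zero_or_pos x with rfl | hx0
  · exact le_rfl
  rcases eq_or_ne x (f 0) with rfl | hxf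
  · omega
  omega

theorem apply_zero_lt_apply (h : IsNCPairing c N f e) (hN : 0 < N) {x : ℕ} (hx : f 0 < x) :
    f 0 < f x := by
  by_contra hle
  have := h.apply_le_apply_zero hN (not_lt.mp hle)
  rw [h.involutive x] at this
  omega

theorem apply_pos_and_lt_apply_zero (h : IsNCPairing c N f e) (hN : 0 < N) {x : ℕ}
    (hx0 : 0 < x) (hx : x < f 0) : 0 < f x ∧ f x < f 0 := by
  have hfx := h.apply_le_apply_zero hN hx.le
  have hf0 := h.involutive 0
  have hfx0 : f x ≠ 0 := fun h0 => by
    have := h.involutive x; rw [h0] at this; omega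
  have hfxf : f x ≠ f 0 := fun h0 => by have := h.involutive.injective h0; omega
  omega

theorem color_eq_false_of_lt_apply_zero (h : IsNCPairing c N f e) (hN : 0 < N) {x : ℕ}
    (hx0 : 0 < x) (hx : x < f 0) : e x = false := by
  have hfx := h.apply_pos_and_lt_apply_zero hN hx0 hx
  have hf0 := h.involutive 0
  rcases lt_or_gt_of_ne (h.ne_self x (by have := h.apply_lt hN; omega)) with hlt | hgt
  · exact Bool.eq_false_iff.mpr fun he => h.colored_outer x (f 0) he (by omega)
  · refine Bool.eq_false_iff.mpr fun he => h.colored_outer (f x) (f 0) ?_ ?_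
    · rwa [h.color_apply]
    · rw [h.involutive x]; omega

end IsNCPairing

section Translate

variable {N : ℕ}

/-- `m (i, true) = (absPart m i, !flipPart m i)`: `flipPart` marks the negative B-pairs. -/
def absPart (m : SIdx N → SIdx N) (x : ℕ) : ℕ :=
  if h : x < N then (m (⟨x, h⟩, true)).1 else x

def flipPart (m : SIdx N → SIdx N) (x : ℕ) : Bool :=
  if h : x < N then !(m (⟨x, h⟩, true)).2 else false

def ofParts (f : ℕ → ℕ) (e : ℕ → Bool) (p : SIdx N) : SIdx N :=
  (if h : f p.1 < N then ⟨f p.1, h⟩ else p.1, xor p.2 (e p.1))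

theorem ofParts_absPart_flipPart {m : SIdx N → SIdx N}
    (hm : ∀ p, m (negIdx p) = negIdx (m p)) : ofParts (absPart m) (flipPart m) = m := by
  funext ⟨i, s⟩
  have hi : absPart m i = (m (i, true)).1 := dif_pos i.2
  have hs : flipPart m i = !(m (i, true)).2 := dif_pos i.2
  have hneg : m (i, false) = negIdx (m (i, true)) := hm (i, true)
  simp only [ofParts, hi, hs, Fin.is_lt, dif_pos]
  cases s
  · simp [hneg, negIdx]
  · simp

variable {f : ℕ → ℕ} {e : ℕ → Bool}

theorem absPart_ofParts (hlt : ∀ i < N, f i < N) (hout : ∀ i, N ≤ i → f i = i) :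
    absPart (ofParts f e : SIdx N → SIdx N) = f := by
  funext x
  by_cases hx : x < N
  · simp [absPart, ofParts, hx, hlt x hx]
  · simp [absPart, hx, hout x (not_lt.mp hx)]

theorem flipPart_ofParts (heout : ∀ i, N ≤ i → e i = false) :
    flipPart (ofParts f e : SIdx N → SIdx N) = e := by
  funext x
  by_cases hx : x < N
  · simp [flipPart, ofParts, hx]
  · simp [flipPart, hx, heout x (not_lt.mp hx)]

theorem ofParts_apply (hlt : ∀ i < N, f i < N) (p : SIdx N) :
    ofParts f e p = (⟨f p.1, hlt _ p.1.2⟩, xor p.2 (e p.1)) := by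
  simp [ofParts, hlt _ p.1.2]

theorem ofParts_negIdx (p : SIdx N) :
    ofParts f e (negIdx p) = negIdx (ofParts f e p) := by
  refine Prod.ext rfl ?_
  simp [ofParts, negIdx]

theorem ofParts_involutive_iff (hlt : ∀ i < N, f i < N) :
    (∀ p : SIdx N, ofParts f e (ofParts f e p) = p) ↔
      ∀ i < N, f (f i) = i ∧ e (f i) = e i := by
  simp only [ofParts_apply hlt, Prod.ext_iff, Fin.ext_iff, Prod.forall, Fin.forall_iff]
  refine ⟨fun h i hi => ?_, fun h i hi s => ?_⟩
  · obtain ⟨h1, h2⟩ := h i hi true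
    refine ⟨h1, ?_⟩
    revert h2; cases e i <;> cases e (f i) <;> simp
  · obtain ⟨h1, h2⟩ := h i hi
    simp [h1, h2]

theorem ofParts_ne_iff (hlt : ∀ i < N, f i < N) :
    ((∀ p : SIdx N, ofParts f e p ≠ negIdx p) ∧ ∀ p : SIdx N, ofParts f e p ≠ p) ↔
      ∀ i < N, f i ≠ i := by
  refine ⟨fun ⟨hneg, hfix⟩ i hi hfi => ?_, fun h => ⟨fun p hp => ?_, fun p hp => ?_⟩⟩
  · have hp : ∀ s, ofParts f e (⟨i, hi⟩, s) = (⟨i, hi⟩, xor s (e i)) := fun s => by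
      rw [ofParts_apply hlt]; simp [hfi]
    cases he : e i
    · exact hfix (⟨i, hi⟩, true) (by rw [hp, he]; rfl)
    · exact hneg (⟨i, hi⟩, true) (by rw [hp, he]; rfl)
  · exact h p.1 p.1.2
      (by simpa [ofParts_apply hlt, negIdx, Fin.ext_iff] using congrArg Prod.fst hp)
  · exact h p.1 p.1.2 (by simpa [ofParts_apply hlt, Fin.ext_iff] using congrArg Prod.fst hp)

theorem abs_sval (p : SIdx N) : |sval p| = (p.1 : ℤ) + 1 := by
  unfold sval
  split_ifs
  · exact abs_of_nonneg (by positivity)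
  · rw [abs_neg]; exact abs_of_nonneg (by positivity)

theorem isRep_iff (m : SIdx N → SIdx N) (p : SIdx N) :
    isRep m p ↔ p.2 = true ∧ ((m p).1 : ℕ) < p.1 := by
  unfold isRep
  rw [abs_sval]
  rcases p with ⟨i, _ | _⟩ <;> simp [sval]

theorem crB_eq_zero_iff (m : SIdx N → SIdx N) :
    CrB m = 0 ↔ ∀ b c : SIdx N,
      ¬(isRep m b ∧ isRep m c ∧
        sval (m b) < sval (m c) ∧ sval (m c) < sval b ∧ sval b < sval c) ∧
      ¬(isRep m b ∧ isRep m c ∧ sval b < sval c ∧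
        -sval b < sval (m c) ∧ sval (m c) < -sval (m b) ∧ -sval (m b) < sval c) := by
  simp only [CrB, Nat.add_eq_zero_iff, Finset.card_eq_zero, Finset.filter_eq_empty_iff,
    Finset.mem_univ, true_implies, Prod.forall, ← forall_and]

theorem sval_ofParts (hlt : ∀ i < N, f i < N) (i : Fin N) :
    sval (ofParts f e (i, true)) = if e i then -((f i : ℤ) + 1) else (f i : ℤ) + 1 := by
  rw [ofParts_apply hlt]
  cases e i <;> simp [sval]

theorem isRep_ofParts_iff (hlt : ∀ i < N, f i < N) (p : SIdx N) :
    isRep (ofParts f e) p ↔ p.2 = true ∧ f p.1 < p.1 := by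
  rw [isRep_iff, ofParts_apply hlt]

theorem crB_ofParts_eq_zero_iff (hlt : ∀ i < N, f i < N) (hout : ∀ i, N ≤ i → f i = i)
    (heout : ∀ i, N ≤ i → e i = false) (hinj : Function.Injective f) :
    CrB (ofParts f e : SIdx N → SIdx N) = 0 ↔
      (∀ j l, ¬(f j < f l ∧ f l < j ∧ j < l)) ∧
        ∀ j l, e j = true → ¬(f l < f j ∧ f j < j ∧ j < l) := by
  have hsv (i : Fin N) : sval ((i, true) : SIdx N) = (i : ℤ) + 1 := by simp [sval]
  rw [crB_eq_zero_iff]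
  constructor
  · intro h
    have key (j l : ℕ) (hj : j < N) (hl : l < N) := h (⟨j, hj⟩, true) (⟨l, hl⟩, true)
    simp only [isRep_ofParts_iff hlt, sval_ofParts hlt, hsv, true_and] at key
    refine ⟨fun j l hjl => ?_, fun j l hej hjl => ?_⟩
    · have hl : l < N := by by_contra hl; have := hout l (by omega); omega
      have := key j l (by omega) hl
      split_ifs at this <;> omega
    · have hj : j < N := by by_contra hj; rw [heout j (by omega)] at hej; contradiction
      have hl : l < N := by by_contra hl; have := hout l (by omega); omega
      have := key j l hj hl
      rw [hej, if_pos rfl] at this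
      split_ifs at this <;> omega
  · rintro ⟨hcross, houter⟩ ⟨J, sJ⟩ ⟨L, sL⟩
    simp only [isRep_ofParts_iff hlt]
    rcases sJ with _ | _
    · simp
    rcases sL with _ | _
    · simp
    simp only [sval_ofParts hlt, hsv]
    have := hcross J L
    have := hinj.ne (a₁ := J) (a₂ := L)
    have := houter J L
    split_ifs with hJ hL hL <;>
      simp only [hJ, hL, true_implies, Bool.false_eq_true, false_implies] at * <;> omega

theorem ofParts_mem_NCB_iff (hlt : ∀ i < N, f i < N) (hout : ∀ i, N ≤ i → f i = i)
    (heout : ∀ i, N ≤ i → e i = false) :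
    ofParts f e ∈ NCB N ↔ IsNCPairing true N f e := by
  simp only [NCB, PB2, PB12, Finset.mem_filter, Finset.mem_univ, true_and]
  constructor
  · rintro ⟨⟨⟨hinv, -, hneg⟩, hfix⟩, hcr⟩
    have hinv := (ofParts_involutive_iff hlt).mp hinv
    have hinvol : Function.Involutive f := fun i => by
      by_cases hi : i < N
      · exact (hinv i hi).1
      · rw [hout i (by omega), hout i (by omega)]
    have hcolor (i : ℕ) : e (f i) = e i := by
      by_cases hi : i < N
      · exact (hinv i hi).2
      · rw [hout i (by omega)]
    obtain ⟨hcross, houter⟩ := (crB_ofParts_eq_zero_iff hlt hout heout hinvol.injective).mp hcr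
    exact ⟨hinvol, (ofParts_ne_iff hlt).mp ⟨hneg, hfix⟩, hout, hcolor, heout,
      fun h => Bool.noConfusion h, hcross, houter⟩
  · intro h
    have hne := (ofParts_ne_iff (e := e) hlt).mpr h.ne_self
    refine ⟨⟨⟨(ofParts_involutive_iff hlt).mpr fun i _ =>
      ⟨h.involutive i, h.color_apply i⟩, ofParts_negIdx, hne.1⟩, hne.2⟩, ?_⟩
    exact (crB_ofParts_eq_zero_iff hlt hout heout h.involutive.injective).mpr
      ⟨h.not_cross, h.colored_outer⟩

theorem map_negIdx_of_mem_NCB {m : SIdx N → SIdx N} (hm : m ∈ NCB N) (p : SIdx N) :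
    m (negIdx p) = negIdx (m p) := by
  simp only [NCB, PB2, PB12, Finset.mem_filter] at hm
  exact hm.1.1.2.2.1 p

theorem isNCPairing_absPart {m : SIdx N → SIdx N} (hm : m ∈ NCB N) :
    IsNCPairing true N (absPart m) (flipPart m) := by
  have hlt (i : ℕ) (hi : i < N) : absPart m i < N := by simp [absPart, hi]
  have hout (i : ℕ) (hi : N ≤ i) : absPart m i = i := by simp [absPart, not_lt.mpr hi]
  have heout (i : ℕ) (hi : N ≤ i) : flipPart m i = false := by simp [flipPart, not_lt.mpr hi]
  rw [← ofParts_mem_NCB_iff hlt hout heout, ofParts_absPart_flipPart (map_negIdx_of_mem_NCB hm)]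
  exact hm

def ncbEquivPairings (N : ℕ) : NCB N ≃ pairings true N where
  toFun m := ⟨(absPart m.1, flipPart m.1), isNCPairing_absPart m.2⟩
  invFun p := ⟨ofParts p.1.1 p.1.2, (ofParts_mem_NCB_iff (fun _ hi => p.2.apply_lt hi)
    p.2.eq_self p.2.color_eq_false).mpr p.2⟩
  left_inv m := Subtype.ext (ofParts_absPart_flipPart (map_negIdx_of_mem_NCB m.2))
  right_inv p := Subtype.ext <| Prod.ext (absPart_ofParts (fun _ hi => p.2.apply_lt hi) p.2.eq_self)
    (flipPart_ofParts p.2.color_eq_false)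

end Translate

def glue (i : ℕ) (g h : ℕ → ℕ) (x : ℕ) : ℕ :=
  if x = 0 then i + 1 else if x ≤ i then g (x - 1) + 1 else if x = i + 1 then 0
  else h (x - (i + 2)) + (i + 2)

def glueColor (i : ℕ) (b : Bool) (e : ℕ → Bool) (x : ℕ) : Bool :=
  if x = 0 ∨ x = i + 1 then b else if x ≤ i then false else e (x - (i + 2))

section Glue

variable {c : Bool} {i n : ℕ} {g h : ℕ → ℕ} {b : Bool} {eg e : ℕ → Bool}

@[simp] theorem glue_zero : glue i g h 0 = i + 1 := by simp [glue]

@[simp] theorem glue_succ_self : glue i g h (i + 1) = 0 := by simp [glue]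

theorem glue_of_pos_of_le {x : ℕ} (h0 : 0 < x) (hx : x ≤ i) : glue i g h x = g (x - 1) + 1 := by
  simp [glue, h0.ne', hx]

theorem glue_of_add_two_le {x : ℕ} (hx : i + 2 ≤ x) :
    glue i g h x = h (x - (i + 2)) + (i + 2) := by
  simp [glue, show x ≠ 0 by omega, show ¬x ≤ i by omega, show x ≠ i + 1 by omega]

@[simp] theorem glueColor_zero : glueColor i b e 0 = b := by simp [glueColor]

@[simp] theorem glueColor_succ_self : glueColor i b e (i + 1) = b := by simp [glueColor]

theorem glueColor_of_pos_of_le {x : ℕ} (h0 : 0 < x) (hx : x ≤ i) :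
    glueColor i b e x = false := by
  simp [glueColor, h0.ne', hx, show x ≠ i + 1 by omega]

theorem glueColor_of_add_two_le {x : ℕ} (hx : i + 2 ≤ x) :
    glueColor i b e x = e (x - (i + 2)) := by
  simp [glueColor, show x ≠ 0 by omega, show ¬x ≤ i by omega, show x ≠ i + 1 by omega]

theorem glue_region (i : ℕ) (g h : ℕ → ℕ) (x : ℕ) :
    (x = 0 → glue i g h x = i + 1) ∧ (x = i + 1 → glue i g h x = 0) ∧
      (0 < x → x ≤ i → glue i g h x = g (x - 1) + 1) ∧
      (i + 2 ≤ x → glue i g h x = h (x - (i + 2)) + (i + 2)) :=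
  ⟨by rintro rfl; exact glue_zero, by rintro rfl; exact glue_succ_self,
    glue_of_pos_of_le, glue_of_add_two_le⟩

theorem glue_involutive (hg : IsNCPairing false i g eg) (hh : IsNCPairing c n h e) :
    Function.Involutive (glue i g h) := by
  intro x
  rcases Nat.eq_zero_or_pos x with rfl | hx0
  · rw [glue_zero, glue_succ_self]
  rcases le_or_gt x i with hxi | hxi
  · have := hg.apply_lt (i := x - 1) (by omega)
    rw [glue_of_pos_of_le hx0 hxi, glue_of_pos_of_le (by omega) (by omega), Nat.add_sub_cancel,
      hg.involutive]
    omega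
  rcases eq_or_ne x (i + 1) with rfl | hx1
  · rw [glue_succ_self, glue_zero]
  · rw [glue_of_add_two_le (x := x) (by omega), glue_of_add_two_le (Nat.le_add_left _ _),
      Nat.add_sub_cancel, hh.involutive]
    omega

theorem glueColor_glue (hg : IsNCPairing false i g eg) (hh : IsNCPairing c n h e) (x : ℕ) :
    glueColor i b e (glue i g h x) = glueColor i b e x := by
  rcases Nat.eq_zero_or_pos x with rfl | hx0
  · simp
  rcases le_or_gt x i with hxi | hxi
  · have := hg.apply_lt (i := x - 1) (by omega)
    rw [glue_of_pos_of_le hx0 hxi, glueColor_of_pos_of_le (by omega) (by omega),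
      glueColor_of_pos_of_le hx0 hxi]
  rcases eq_or_ne x (i + 1) with rfl | hx1
  · simp
  · rw [glue_of_add_two_le (by omega), glueColor_of_add_two_le (Nat.le_add_left _ _),
      glueColor_of_add_two_le (by omega), Nat.add_sub_cancel, hh.color_apply]

theorem isNCPairing_glue (hg : IsNCPairing false i g eg) (hh : IsNCPairing c n h e)
    (hb : c = false → b = false) :
    IsNCPairing c (i + 2 + n) (glue i g h) (glueColor i b e) where
  involutive := glue_involutive hg hh
  ne_self x hx := by
    have := glue_region i g h x
    have := hg.ne_self (x - 1)
    have := hh.ne_self (x - (i + 2))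
    omega
  eq_self x hx := by
    rw [glue_of_add_two_le (by omega), hh.eq_self _ (by omega)]
    omega
  color_apply := glueColor_glue hg hh
  color_eq_false x hx := by
    rw [glueColor_of_add_two_le (by omega), hh.color_eq_false _ (by omega)]
  uncolored hc x := by
    unfold glueColor
    split_ifs
    exacts [hb hc, rfl, hh.uncolored hc _]
  not_cross j l := by
    have rj := glue_region i g h j
    have rl := glue_region i g h l
    by_cases hinner : 0 < j ∧ l ≤ i
    · have := hg.not_cross (j - 1) (l - 1)
      omega
    by_cases houter : i + 2 ≤ j
    · have := hh.not_cross (j - (i + 2)) (l - (i + 2))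
      omega
    omega
  colored_outer j l hj := by
    have rj := glue_region i g h j
    have rl := glue_region i g h l
    by_cases houter : i + 2 ≤ j
    · rw [glueColor_of_add_two_le houter] at hj
      have := hh.colored_outer (j - (i + 2)) (l - (i + 2)) hj
      omega
    by_cases hinner : 0 < j ∧ j ≤ i
    · rw [glueColor_of_pos_of_le hinner.1 hinner.2] at hj
      exact absurd hj Bool.false_ne_true
    omega

end Glue

def innerPart (i : ℕ) (f : ℕ → ℕ) (x : ℕ) : ℕ := if x < i then f (x + 1) - 1 else x

def outerPart (k : ℕ) (f : ℕ → ℕ) (x : ℕ) : ℕ := f (x + k) - k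

section Split

variable {c : Bool} {N i : ℕ} {f : ℕ → ℕ} {e : ℕ → Bool}

theorem isNCPairing_innerPart (h : IsNCPairing c N f e) (hN : 0 < N) (h0 : f 0 = i + 1) :
    IsNCPairing false i (innerPart i f) (fun _ => false) := by
  have key : ∀ x < i, 0 < f (x + 1) ∧ f (x + 1) < i + 1 := fun x hx =>
    h0 ▸ h.apply_pos_and_lt_apply_zero hN (Nat.succ_pos x) (by omega)
  refine ⟨fun x => ?_, fun x hx => ?_, fun x hx => if_neg (by omega), fun _ => rfl,
    fun _ _ => rfl, fun _ _ => rfl, fun j l => ?_, fun _ _ he => absurd he Bool.false_ne_true⟩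
  · by_cases hx : x < i
    · have := key x hx
      simp only [innerPart, if_pos hx, if_pos (show f (x + 1) - 1 < i by omega),
        Nat.sub_add_cancel this.1, h.involutive (x + 1)]
      omega
    · simp only [innerPart, if_neg hx]
  · have := key x hx
    have := h.ne_self (x + 1) (by have := h.apply_lt hN; omega)
    simp only [innerPart, if_pos hx]
    omega
  · have := h.not_cross (j + 1) (l + 1)
    unfold innerPart
    split_ifs <;> omega

theorem IsNCPairing.le_apply_add (h : IsNCPairing c N f e) (hN : 0 < N) (h0 : f 0 = i + 1)
    (x : ℕ) :
    i + 2 ≤ f (x + (i + 2)) := by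
  have := h.apply_zero_lt_apply hN (x := x + (i + 2)) (by omega)
  omega

theorem isNCPairing_outerPart (h : IsNCPairing c N f e) (hN : 0 < N) (h0 : f 0 = i + 1) :
    IsNCPairing c (N - (i + 2)) (outerPart (i + 2) f) (fun x => e (x + (i + 2))) := by
  have key := h.le_apply_add hN h0
  refine ⟨fun x => ?_, fun x hx => ?_, fun x hx => ?_, fun x => ?_,
    fun x hx => h.color_eq_false _ (by omega), fun hc x => h.uncolored hc _,
    fun j l => ?_, fun j l he => ?_⟩
  · simp only [outerPart, Nat.sub_add_cancel (key x), h.involutive (x + (i + 2))]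
    omega
  · have := h.ne_self (x + (i + 2)) (by omega)
    have := key x
    simp only [outerPart]
    omega
  · simp only [outerPart, h.eq_self _ (show N ≤ x + (i + 2) by omega)]
    omega
  · simp only [outerPart, Nat.sub_add_cancel (key x), h.color_apply]
  · have := h.not_cross (j + (i + 2)) (l + (i + 2))
    have := key j
    have := key l
    simp only [outerPart]
    omega
  · have := h.colored_outer (j + (i + 2)) (l + (i + 2)) he
    have := key j
    have := key l
    simp only [outerPart]
    omega

end Split

section RoundTrip

variable {c : Bool} {N i : ℕ} {f : ℕ → ℕ} {e : ℕ → Bool}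

theorem glue_innerPart_outerPart (h : IsNCPairing c N f e) (hN : 0 < N)
    (h0 : f 0 = i + 1) : glue i (innerPart i f) (outerPart (i + 2) f) = f := by
  funext x
  rcases Nat.eq_zero_or_pos x with rfl | hx0
  · rw [glue_zero, h0]
  rcases le_or_gt x i with hxi | hxi
  · have := h.apply_pos_and_lt_apply_zero hN hx0 (by omega)
    rw [glue_of_pos_of_le hx0 hxi, innerPart, if_pos (by omega), Nat.sub_add_cancel hx0]
    omega
  rcases eq_or_ne x (i + 1) with rfl | hx1
  · rw [glue_succ_self, ← h0, h.involutive 0]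
  · have := h.le_apply_add hN h0 (x - (i + 2))
    rw [glue_of_add_two_le (by omega), outerPart, Nat.sub_add_cancel (by omega : i + 2 ≤ x)] at *
    omega

theorem glueColor_innerPart_outerPart (h : IsNCPairing c N f e)
    (hN : 0 < N) (h0 : f 0 = i + 1) : glueColor i (e 0) (fun x => e (x + (i + 2))) = e := by
  funext x
  rcases Nat.eq_zero_or_pos x with rfl | hx0
  · rw [glueColor_zero]
  rcases le_or_gt x i with hxi | hxi
  · rw [glueColor_of_pos_of_le hx0 hxi, h.color_eq_false_of_lt_apply_zero hN hx0 (by omega)]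
  rcases eq_or_ne x (i + 1) with rfl | hx1
  · rw [glueColor_succ_self, ← h0, h.color_apply]
  · rw [glueColor_of_add_two_le (by omega), Nat.sub_add_cancel (by omega : i + 2 ≤ x)]

variable {g h : ℕ → ℕ} {b : Bool} {eg : ℕ → Bool}

theorem innerPart_glue (hg : IsNCPairing false i g eg) : innerPart i (glue i g h) = g := by
  funext x
  by_cases hx : x < i
  · rw [innerPart, if_pos hx, glue_of_pos_of_le (by omega) (by omega)]
    rfl
  · rw [innerPart, if_neg hx, hg.eq_self x (by omega)]

theorem outerPart_glue : outerPart (i + 2) (glue i g h) = h := by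
  funext x
  rw [outerPart, glue_of_add_two_le (by omega), Nat.add_sub_cancel, Nat.add_sub_cancel]

theorem glueColor_comp_add :
    (fun x => glueColor i b e (x + (i + 2))) = e := by
  funext x
  rw [glueColor_of_add_two_le (by omega), Nat.add_sub_cancel]

end RoundTrip

instance (c : Bool) (N : ℕ) : Finite (pairings c N) := by
  refine Finite.of_injective (fun p : pairings c N =>
    (fun i : Fin N => (⟨p.1.1 i, p.2.apply_lt i.2⟩ : Fin N), fun i : Fin N => p.1.2 i)) ?_
  rintro ⟨⟨f, e⟩, hp⟩ ⟨⟨f', e'⟩, hp'⟩ heq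
  simp only [Prod.mk.injEq, funext_iff, Fin.ext_iff, Fin.forall_iff] at heq
  rw [mem_pairings] at hp hp'
  ext x
  · by_cases hx : x < N
    · exact heq.1 x hx
    · rw [hp.eq_self x (by omega), hp'.eq_self x (by omega)]
  · by_cases hx : x < N
    · exact heq.2 x hx
    · rw [hp.color_eq_false x (by omega), hp'.color_eq_false x (by omega)]

abbrev Colors (c : Bool) : Type := {b : Bool // c = false → b = false}

theorem card_colors (c : Bool) : Nat.card (Colors c) = c.toNat + 1 := by
  cases c <;> rw [Nat.card_eq_fintype_card] <;> decide

/-- Removing the pair `{0, i + 1}` splits a pairing into its colour, the uncoloured pairing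
inside it and the pairing to its right. -/
def fiberEquiv (c : Bool) {m i : ℕ} (him : i ≤ m) :
    {p : pairings c (m + 2) // p.1.1 0 = i + 1} ≃
      Colors c × pairings false i × pairings c (m - i) where
  toFun p := (⟨p.1.1.2 0, fun hc => p.1.2.uncolored hc 0⟩,
    ⟨(innerPart i p.1.1.1, fun _ => false), isNCPairing_innerPart p.1.2 (by omega) p.2⟩,
    ⟨(outerPart (i + 2) p.1.1.1, fun x => p.1.1.2 (x + (i + 2))), by
      simpa only [mem_pairings, show m + 2 - (i + 2) = m - i by omega]
        using isNCPairing_outerPart p.1.2 (by omega) p.2⟩)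
  invFun q := ⟨⟨(glue i q.2.1.1.1 q.2.2.1.1, glueColor i q.1 q.2.2.1.2), by
      simpa only [mem_pairings, show i + 2 + (m - i) = m + 2 by omega]
        using isNCPairing_glue q.2.1.2 q.2.2.2 q.1.2⟩,
    glue_zero (g := q.2.1.1.1) (h := q.2.2.1.1)⟩
  left_inv p := by
    obtain ⟨⟨⟨f, e⟩, hp⟩, h0⟩ := p
    ext : 2
    exact Prod.ext (glue_innerPart_outerPart hp (by omega) h0)
      (glueColor_innerPart_outerPart hp (by omega) h0)
  right_inv q := by
    obtain ⟨b, ⟨⟨g, eg⟩, hg⟩, ⟨⟨h, eh⟩, hh⟩⟩ := q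
    refine Prod.ext (Subtype.ext ?_) (Prod.ext (Subtype.ext ?_) (Subtype.ext ?_))
    · exact glueColor_zero (i := i) (e := eh)
    · exact Prod.ext (innerPart_glue hg) (funext fun x => (hg.uncolored rfl x).symm)
    · exact Prod.ext outerPart_glue (glueColor_comp_add)

section Count

open Finset

theorem card_pairings_add_two (c : Bool) (m : ℕ) :
    Nat.card (pairings c (m + 2)) = (c.toNat + 1) *
      ∑ p ∈ antidiagonal m, Nat.card (pairings false p.1) * Nat.card (pairings c p.2) := by
  let φ : pairings c (m + 2) → Fin (m + 1) := fun p =>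
    ⟨p.1.1 0 - 1, by have := p.2.apply_lt (i := 0) (by omega); omega⟩
  have hfiber (i : Fin (m + 1)) : Nat.card {p // φ p = i} =
      (c.toNat + 1) * (Nat.card (pairings false i) * Nat.card (pairings c (m - i))) := by
    rw [← card_colors, ← Nat.card_prod, ← Nat.card_prod]
    refine Nat.card_congr ((Equiv.subtypeEquivRight fun p => ?_).trans
      (fiberEquiv c (Nat.lt_succ_iff.mp i.2)))
    have := p.2.ne_self 0 (by omega)
    simp only [φ, Fin.ext_iff]
    omega
  rw [← Nat.card_congr (Equiv.sigmaFiberEquiv φ), Nat.card_sigma]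
  simp only [hfiber, ← Finset.mul_sum]
  rw [Nat.sum_antidiagonal_eq_sum_range_succ_mk, Fin.sum_univ_eq_sum_range
    (fun i => Nat.card (pairings false i) * Nat.card (pairings c (m - i)))]

theorem card_pairings_zero (c : Bool) : Nat.card (pairings c 0) = 1 := by
  refine Nat.card_eq_one_iff_exists.mpr
    ⟨⟨(id, fun _ => false), ?_⟩, fun ⟨⟨f, e⟩, hp⟩ => ?_⟩
  · exact ⟨fun _ => rfl, fun _ hi => absurd hi (Nat.not_lt_zero _), fun _ _ => rfl,
      fun _ => rfl, fun _ _ => rfl, fun _ _ => rfl, fun _ _ => by simp only [id]; omega,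
      fun _ _ h => absurd h Bool.false_ne_true⟩
  · rw [mem_pairings] at hp
    ext x
    exacts [hp.eq_self x (Nat.zero_le x), hp.color_eq_false x (Nat.zero_le x)]

theorem card_pairings_one (c : Bool) : Nat.card (pairings c 1) = 0 :=
  Nat.card_eq_zero.mpr <| Or.inl ⟨fun p => by
    have := p.2.apply_lt (i := 0) one_pos
    exact p.2.ne_self 0 one_pos (by omega)⟩

theorem sum_antidiagonal_two_mul {M : Type*} [AddCommMonoid M] (k : ℕ) (F : ℕ × ℕ → M)
    (hF : ∀ p ∈ antidiagonal (2 * k), Odd p.1 → F p = 0) :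
    ∑ p ∈ antidiagonal (2 * k), F p = ∑ p ∈ antidiagonal k, F (2 * p.1, 2 * p.2) := by
  let double : ℕ × ℕ ↪ ℕ × ℕ :=
    ⟨fun p => (2 * p.1, 2 * p.2), fun p q h => by simp only [Prod.mk.injEq] at h; ext <;> omega⟩
  rw [show ∑ p ∈ antidiagonal k, F (2 * p.1, 2 * p.2) =
    ∑ p ∈ (antidiagonal k).map double, F p from (sum_map (antidiagonal k) double F).symm]
  refine (sum_subset (fun p hp => ?_) fun p hp hpk => hF p hp ?_).symm
  · obtain ⟨q, hq, rfl⟩ := mem_map.mp hp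
    rw [HasAntidiagonal.mem_antidiagonal] at hq ⊢
    change 2 * q.1 + 2 * q.2 = 2 * k
    omega
  · rw [HasAntidiagonal.mem_antidiagonal] at hp
    refine Nat.not_even_iff_odd.mp fun ⟨s, hs⟩ => hpk (mem_map.mpr ⟨(s, k - s), ?_, ?_⟩)
    · rw [HasAntidiagonal.mem_antidiagonal]; omega
    · change (2 * s, 2 * (k - s)) = p
      ext <;> dsimp only <;> omega

theorem card_uncolored_two_mul_add_one (k : ℕ) : Nat.card (pairings false (2 * k + 1)) = 0 := by
  induction k using Nat.strong_induction_on with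
  | _ k ih =>
    rcases k with _ | k
    · exact card_pairings_one false
    rw [show 2 * (k + 1) + 1 = 2 * k + 1 + 2 by ring, card_pairings_add_two]
    refine Nat.mul_eq_zero.mpr (Or.inr (sum_eq_zero fun p hp => ?_))
    rw [HasAntidiagonal.mem_antidiagonal] at hp
    rcases Nat.even_or_odd p.1 with ⟨s, hs⟩ | ⟨s, hs⟩
    · rw [show p.2 = 2 * (k - s) + 1 by omega, ih _ (by omega), mul_zero]
    · rw [hs, ih _ (by omega), zero_mul]

theorem card_pairings_two_mul_add_two (c : Bool) (k : ℕ) :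
    Nat.card (pairings c (2 * k + 2)) = (c.toNat + 1) * ∑ p ∈ antidiagonal k,
      Nat.card (pairings false (2 * p.1)) * Nat.card (pairings c (2 * p.2)) := by
  rw [card_pairings_add_two, sum_antidiagonal_two_mul k]
  rintro p - ⟨s, hs⟩
  rw [hs, card_uncolored_two_mul_add_one, zero_mul]

theorem card_uncolored_two_mul (k : ℕ) : Nat.card (pairings false (2 * k)) = catalan k := by
  induction k using Nat.strong_induction_on with
  | _ k ih =>
    rcases k with _ | k
    · rw [mul_zero, card_pairings_zero, catalan_zero]
    rw [mul_add_one, card_pairings_two_mul_add_two, catalan_succ', Bool.toNat_false, zero_add,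
      one_mul]
    refine sum_congr rfl fun p hp => ?_
    rw [HasAntidiagonal.mem_antidiagonal] at hp
    rw [ih _ (by omega), ih _ (by omega)]

theorem centralBinom_succ_eq_two_mul_sum (n : ℕ) :
    (n + 1).centralBinom = 2 * ∑ p ∈ antidiagonal n, catalan p.1 * p.2.centralBinom := by
  calc (n + 1).centralBinom = (n + 2) * ∑ p ∈ antidiagonal n, catalan p.1 * catalan p.2 := by
        rw [← succ_mul_catalan_eq_centralBinom, catalan_succ']
    _ = ∑ p ∈ antidiagonal n,
          (catalan p.1 * p.2.centralBinom + catalan p.2 * p.1.centralBinom) := by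
        rw [mul_sum]
        refine sum_congr rfl fun p hp => ?_
        rw [← succ_mul_catalan_eq_centralBinom, ← succ_mul_catalan_eq_centralBinom,
          ← HasAntidiagonal.mem_antidiagonal.mp hp]
        ring
    _ = 2 * ∑ p ∈ antidiagonal n, catalan p.1 * p.2.centralBinom := by
        rw [sum_add_distrib, ← Nat.sum_antidiagonal_swap]
        simp only [Prod.fst_swap, Prod.snd_swap]
        ring

theorem card_colored_two_mul (n : ℕ) : Nat.card (pairings true (2 * n)) = n.centralBinom := by
  induction n using Nat.strong_induction_on with
  | _ n ih =>
    rcases n with _ | n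
    · rw [mul_zero, card_pairings_zero, Nat.centralBinom_zero]
    rw [mul_add_one, card_pairings_two_mul_add_two, centralBinom_succ_eq_two_mul_sum]
    refine congrArg (2 * ·) (sum_congr rfl fun p hp => ?_)
    rw [HasAntidiagonal.mem_antidiagonal] at hp
    rw [card_uncolored_two_mul, ih _ (by omega)]

end Count

end NCPairing

/-- For every `n ≥ 0`, the number of non-crossing type-B pair partitions
of `[±2n]` is the central binomial coefficient: `#NC^B_2(2n) = C(2n, n)`. -/
theorem NCB_card (n : ℕ) : (NCB (2 * n)).card = Nat.choose (2 * n) n := by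
  rw [← Nat.card_eq_finsetCard, Nat.card_congr (NCPairing.ncbEquivPairings _),
    NCPairing.card_colored_two_mul, Nat.centralBinom_eq_two_mul_choose]
end
end
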